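/- arXiv:2303.00447 — 2 statements merged into one kernel-verified Lean document; each statement's English description precedes it below -/
import Mathlib

section
/- Let s ≥ 0 and consider the matrix N_s(T_1,…,T_s) over the polynomial ring ℤ[T_1,…,T_s]. For every integer i ≥ 0, the i-th Fitting ideal of this matrix, i.e., the ideal generated by all its (s−i)×(s−i) minors (the unit ideal when i ≥ s), is: the unit ideal (1) if i ≥ s; the zero ideal if s ≥ 1 and i = 0; and (T_1,…,T_s)^{s−i} if 1 ≤ i < s. -/
/-!
Every entry of `N` lies in `𝔪 = (T₁, …, Tₛ)`, so its `k × k` minors lie in `𝔪 ^ k`. Conversely,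
for `k < s` every monomial `T_{j₁} ⋯ T_{jₖ}` is, up to sign, a triangular `k × k` minor: choose
distinct columns `cₐ ∉ {jₐ, …, jₖ}` (greedily, which is possible since `k < s`) and take the rows
`{jₐ, cₐ}`. Finally `N T = 0` with `T ≠ 0` over a domain, so every `s × s` minor vanishes.
-/

open Matrix MvPolynomial

namespace Matrix

variable {R : Type*} [CommRing R] {m n : Type*}

def minorIdeal (M : Matrix m n R) (k : ℕ) : Ideal R :=
  Ideal.span {d | ∃ (r : Fin k → m) (c : Fin k → n), d = (M.submatrix r c).det}

lemma minorIdeal_zero (M : Matrix m n R) : M.minorIdeal 0 = ⊤ :=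
  (Ideal.eq_top_iff_one _).2 <| Ideal.subset_span ⟨Fin.elim0, Fin.elim0, det_isEmpty.symm⟩

lemma det_mem_pow_of_forall_mem [Fintype n] [DecidableEq n] {I : Ideal R} {M : Matrix n n R}
    (h : ∀ i j, M i j ∈ I) : M.det ∈ I ^ Fintype.card n := by
  rw [det_apply]
  refine Ideal.sum_mem _ fun σ _ => Submodule.smul_of_tower_mem _ _ ?_
  rw [← Finset.card_univ, ← Finset.prod_const]
  exact Ideal.prod_mem_prod fun i _ => h _ _

lemma minorIdeal_le_pow {I : Ideal R} {M : Matrix m n R} (h : ∀ i j, M i j ∈ I) (k : ℕ) :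
    M.minorIdeal k ≤ I ^ k := by
  refine Ideal.span_le.2 ?_
  rintro _ ⟨r, c, rfl⟩
  simpa using det_mem_pow_of_forall_mem (M := M.submatrix r c) fun a b => h _ _

lemma minorIdeal_card_eq_bot [IsDomain R] [Fintype n] {M : Matrix m n R} {v : n → R}
    (hv : v ≠ 0) (hMv : M *ᵥ v = 0) : M.minorIdeal (Fintype.card n) = ⊥ := by
  refine Ideal.span_eq_bot.2 ?_
  rintro _ ⟨r, c, rfl⟩
  by_cases hc : Function.Injective c
  · let e : Fin (Fintype.card n) ≃ n :=
      Equiv.ofBijective c ((Fintype.bijective_iff_injective_and_card c).2 ⟨hc, by simp⟩)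
    refine exists_mulVec_eq_zero_iff.1 ⟨v ∘ e, fun h => hv ?_, ?_⟩
    · funext x
      simpa using congrFun h (e.symm x)
    · have := submatrix_mulVec_equiv M (v ∘ e) r e
      rwa [Function.comp_assoc, e.self_comp_symm, Function.comp_id, hMv] at this
  · obtain ⟨a, b, hab, hne⟩ := Function.not_injective_iff.1 hc
    exact det_zero_of_column_eq hne fun x => by simp [hab]

end Matrix

theorem exists_injective_forall_notMem_ne {α : Type*} [Fintype α] [DecidableEq α] :
    ∀ {k : ℕ} (j : Fin k → α) (F : Finset α), F.card + k < Fintype.card α →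
      ∃ c : Fin k → α, Function.Injective c ∧ (∀ a, c a ∉ F) ∧ ∀ a b, a ≤ b → c a ≠ j b
  | 0, _, _, _ => ⟨Fin.elim0, fun a => a.elim0, fun a => a.elim0, fun a => a.elim0⟩
  | k + 1, j, F, h => by
    have hcard : (F ∪ Finset.univ.image j).card < (Finset.univ : Finset α).card := by
      grw [Finset.card_union_le, Finset.card_image_le]
      simpa [← add_assoc] using h
    obtain ⟨c₀, -, hc₀⟩ := Finset.exists_mem_notMem_of_card_lt_card hcard
    simp only [Finset.mem_union, Finset.mem_image, Finset.mem_univ, true_and, not_or,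
      not_exists] at hc₀
    obtain ⟨c, hc, hcF, hcj⟩ := exists_injective_forall_notMem_ne (j ∘ Fin.succ) (insert c₀ F)
      (by grw [Finset.card_insert_le]; omega)
    refine ⟨Fin.cons c₀ c, Fin.cons_injective_iff.2 ⟨?_, hc⟩,
      Fin.cases hc₀.1 fun a ha => hcF a (Finset.mem_insert_of_mem ha), fun a b hab => ?_⟩
    · rintro ⟨a, rfl⟩
      exact hcF a (Finset.mem_insert_self _ _)
    · induction a using Fin.cases with
      | zero => exact fun h => hc₀.2 b h.symm
      | succ a =>
        induction b using Fin.cases with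
        | zero => exact absurd hab (Fin.succ_pos a).not_ge
        | succ b => exact hcj a b (Fin.succ_le_succ_iff.1 hab)

section Koszul

variable {R : Type*} [CommRing R] {ι : Type*} [LinearOrder ι]

def koszulMatrix (T : ι → R) : Matrix {p : ι × ι // p.1 < p.2} ι R :=
  of fun q c => if c = q.1.1 then -T q.1.2 else if c = q.1.2 then T q.1.1 else 0

def sortedPair {x y : ι} (h : x ≠ y) : {p : ι × ι // p.1 < p.2} :=
  ⟨(min x y, max x y), min_lt_max.2 h⟩

variable (T : ι → R)

lemma koszulMatrix_apply_mem_span (q : {p : ι × ι // p.1 < p.2}) (c : ι) :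
    koszulMatrix T q c ∈ Ideal.span (Set.range T) := by
  rw [koszulMatrix, of_apply]
  split_ifs
  exacts [neg_mem (Ideal.subset_span ⟨_, rfl⟩), Ideal.subset_span ⟨_, rfl⟩, zero_mem _]

lemma koszulMatrix_mulVec_self [Fintype ι] : koszulMatrix T *ᵥ T = 0 := by
  ext ⟨⟨l, l'⟩, hl⟩
  rw [mulVec, dotProduct, Fintype.sum_eq_add l l' hl.ne fun c hc => by
    simp [koszulMatrix, hc.1, hc.2]]
  simp [koszulMatrix, hl.ne']
  ring

lemma koszulMatrix_sortedPair_apply_of_ne {x y z : ι} (h : x ≠ y) (hx : z ≠ x) (hy : z ≠ y) :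
    koszulMatrix T (sortedPair h) z = 0 := by
  rcases h.lt_or_gt with hxy | hxy <;> simp [koszulMatrix, sortedPair, hxy.le, hx, hy]

lemma associated_koszulMatrix_sortedPair_apply {x y : ι} (h : x ≠ y) :
    Associated (koszulMatrix T (sortedPair h) y) (T x) := by
  rcases h.lt_or_gt with hxy | hxy
  · simp [koszulMatrix, sortedPair, hxy.le, h.symm]
  · simp [koszulMatrix, sortedPair, hxy.le]

variable [Fintype ι]

lemma prod_mem_minorIdeal_koszulMatrix {k : ℕ} (hk : k < Fintype.card ι) (j : Fin k → ι) :
    ∏ a, T (j a) ∈ (koszulMatrix T).minorIdeal k := by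
  classical
  obtain ⟨c, hc, -, hcj⟩ := exists_injective_forall_notMem_ne j ∅ (by simpa using hk)
  have hne (a : Fin k) : j a ≠ c a := (hcj a a le_rfl).symm
  let M := (koszulMatrix T).submatrix (fun a => sortedPair (hne a)) c
  have hM : M.IsUpperTriangular := fun a b hba =>
    koszulMatrix_sortedPair_apply_of_ne T _ (hcj b a hba.le) (hc.ne hba.ne)
  have hdet : Associated M.det (∏ a, T (j a)) := by
    rw [det_of_isUpperTriangular hM]
    exact Associated.prod _ _ _ fun a _ => associated_koszulMatrix_sortedPair_apply T (hne a)
  exact (Ideal.mem_iff_of_associated hdet).1 (Ideal.subset_span ⟨_, c, rfl⟩)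

lemma minorIdeal_koszulMatrix_eq_pow {k : ℕ} (hk : k < Fintype.card ι) :
    (koszulMatrix T).minorIdeal k = Ideal.span (Set.range T) ^ k := by
  refine le_antisymm (minorIdeal_le_pow (koszulMatrix_apply_mem_span T) k) ?_
  rw [Ideal.span, Submodule.span_pow, Submodule.span_le]
  rintro _ hx
  obtain ⟨f, hf, rfl⟩ := Set.mem_pow_iff_prod.1 hx
  choose j hj using hf
  obtain rfl : f = T ∘ j := funext fun a => (hj a).symm
  exact prod_mem_minorIdeal_koszulMatrix T hk j

lemma minorIdeal_koszulMatrix_card_eq_bot [IsDomain R] (hT : T ≠ 0) :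
    (koszulMatrix T).minorIdeal (Fintype.card ι) = ⊥ :=
  minorIdeal_card_eq_bot hT (koszulMatrix_mulVec_self T)

end Koszul

theorem fitting_ideals_of_Ns
    (s : ℕ) (i : ℕ) :
    letI P := MvPolynomial (Fin s) ℤ
    letI T : Fin s → P := fun l => MvPolynomial.X l
    letI ρ := {p : Fin s × Fin s // p.1 < p.2}
    letI N : Matrix ρ (Fin s) P := Matrix.of fun q c =>
      if c = q.1.1 then -(T q.1.2) else if c = q.1.2 then T q.1.1 else 0
    letI FittI : Ideal P := Ideal.span
      {d : P | ∃ (r : Fin (s - i) → ρ) (c : Fin (s - i) → Fin s),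
        d = (N.submatrix r c).det}
    (s ≤ i → FittI = ⊤) ∧
      (1 ≤ s → i = 0 → FittI = ⊥) ∧
      (1 ≤ i → i < s → FittI = (Ideal.span (Set.range T)) ^ (s - i)) := by
  show (s ≤ i → (koszulMatrix X).minorIdeal (s - i) = ⊤) ∧
      (1 ≤ s → i = 0 → (koszulMatrix X).minorIdeal (s - i) = ⊥) ∧
      (1 ≤ i → i < s → (koszulMatrix X).minorIdeal (s - i) =
        Ideal.span (Set.range (X : Fin s → MvPolynomial (Fin s) ℤ)) ^ (s - i))
  refine ⟨fun hsi => ?_, fun hs hi => ?_, fun _ his => ?_⟩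
  · rw [Nat.sub_eq_zero_of_le hsi]
    exact minorIdeal_zero _
  · have hX : (X : Fin s → MvPolynomial (Fin s) ℤ) ≠ 0 :=
      fun h => X_ne_zero (⟨0, hs⟩ : Fin s) (congrFun h _)
    simpa [hi] using minorIdeal_koszulMatrix_card_eq_bot _ hX
  · exact minorIdeal_koszulMatrix_eq_pow _ (by rw [Fintype.card_fin]; omega)
end

section
/- Let Γ be a group acting on a finite nonempty set V, and let L : V × V → ℤ be a Γ-equivariant integer Laplacian-type matrix (symmetric, nonpositive off-diagonal entries, zero row sums, L(γ·v, γ·w) = L(v,w)) whose support graph is connected. Then Jac := ker(deg)/L(ℤ^V) is a finite abelian group, and there is an isomorphism of ℤ[Γ]-modules Jac ≅ Hom_ℤ(Jac, ℚ/ℤ), where Γ acts on the Pontryagin dual by (γ·φ)(x) = φ(γ^{−1}·x) (the contragredient, i.e. ι-twisted, action). -/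
/-!
Over `ℚ` the kernel of a connected Laplacian `L` is spanned by the all-ones vector, so `L + J`
(`J` the all-ones matrix) is invertible, and since `J` kills sum-zero vectors its inverse `G`
inverts `L` on them. The pairing `⟨x, y⟩ = xᵀ G y mod ℤ` on `ker deg` is integral as soon as one
argument lies in `L(ℤ^V)`, so it descends to `Jac`. It is perfect: if `xᵀ G y ∈ ℤ` for all
`y ∈ ker deg`, then `G x` is an integer vector `m` up to a constant, which `L` kills, so
`x = L (G x) = L m`; and every character of `Jac` is `y ↦ rᵀ y` for some `r ∈ ℚ^V`, for which
`L r` is integral and pairs to exactly that character. Clearing the denominators of `G` shows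
that `Jac` is torsion, hence finite, and `Γ`-invariance of `L` passes to `G`, making the pairing
`Γ`-invariant.
-/

section Defs

variable (V : Type) [Fintype V] (Γ : Type) [Group Γ] [MulAction Γ V]

/-- deg : ℤ^V → ℤ, the sum of coordinates. -/
noncomputable def degMap : (V → ℤ) →ₗ[ℤ] ℤ := ∑ v : V, LinearMap.proj v

/-- The endomorphism of ℤ^V given by the matrix L. -/
noncomputable def lapMap (L : V → V → ℤ) : (V → ℤ) →ₗ[ℤ] (V → ℤ) :=
  Matrix.mulVecLin (Matrix.of L)

/-- The action of γ ∈ Γ on ℤ^V : (γ • x)(v) = x(γ⁻¹ • v). -/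
noncomputable def actMap (γ : Γ) : (V → ℤ) →ₗ[ℤ] (V → ℤ) :=
  LinearMap.funLeft ℤ ℤ fun v => γ⁻¹ • v

/-- Jac = ker(deg)/L(ℤ^V). -/
noncomputable abbrev jacQuot (L : V → V → ℤ) :=
  ↥(LinearMap.ker (degMap V)) ⧸
    Submodule.comap (LinearMap.ker (degMap V)).subtype (LinearMap.range (lapMap V L))

/-- The projection ker(deg) → Jac. -/
noncomputable def jacMk (L : V → V → ℤ) :
    ↥(LinearMap.ker (degMap V)) →ₗ[ℤ] jacQuot V L :=
  Submodule.mkQ _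

end Defs

open Matrix

local notation "ℚ⧸ℤ" => ℚ ⧸ AddSubgroup.zmultiples (1 : ℚ)

namespace Matrix

variable {V : Type*} [Fintype V]

structure IsConnectedLaplacian {R : Type*} [AddCommMonoid R] [LE R] (L : Matrix V V R) : Prop where
  isSymm : L.IsSymm
  nonpos_of_ne : ∀ v w, v ≠ w → L v w ≤ 0
  sum_row : ∀ v, ∑ w, L v w = 0
  connected : (SimpleGraph.fromRel fun v w => L v w ≠ 0).Connected

lemma IsSymm.mulVec_dotProduct {R : Type*} [CommSemiring R] {A : Matrix V V R} (hA : A.IsSymm)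
    (x y : V → R) : A *ᵥ x ⬝ᵥ y = x ⬝ᵥ A *ᵥ y := by
  rw [dotProduct_mulVec, ← mulVec_transpose, hA.eq, dotProduct_comm]

lemma dotProduct_mulVec_comp_equiv {R : Type*} [CommSemiring R] {M : Matrix V V R} {σ : V ≃ V}
    (h : M.submatrix σ σ = M) (x y : V → R) : x ∘ σ ⬝ᵥ M *ᵥ (y ∘ σ) = x ⬝ᵥ M *ᵥ y := by
  conv_lhs => rw [← h, submatrix_mulVec_equiv]
  simp [Function.comp_assoc, comp_equiv_dotProduct_comp_equiv]

lemma add_ones_mulVec {R : Type*} [CommSemiring R] (L : Matrix V V R) (ξ : V → R) :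
    (L + of fun _ _ => 1) *ᵥ ξ = L *ᵥ ξ + fun _ => ∑ v, ξ v := by
  rw [add_mulVec]
  ext v
  simp [mulVec, dotProduct]

section Green

variable {𝕜 : Type*} [Field 𝕜] [DecidableEq V]

noncomputable def greenMatrix (L : Matrix V V 𝕜) : Matrix V V 𝕜 :=
  (L + of fun _ _ => 1)⁻¹

lemma greenMatrix_submatrix {L : Matrix V V 𝕜} {σ : V ≃ V} (h : L.submatrix σ σ = L) :
    (greenMatrix L).submatrix σ σ = greenMatrix L := by
  have hA : (L + of fun _ _ => (1 : 𝕜)).submatrix σ σ = L + of fun _ _ => 1 := by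
    ext v w
    rw [submatrix_apply, add_apply, add_apply, ← submatrix_apply L σ σ, h]
    rfl
  rw [greenMatrix, ← inv_submatrix_equiv, hA]

lemma IsSymm.greenMatrix {L : Matrix V V 𝕜} (hL : L.IsSymm) : (greenMatrix L).IsSymm :=
  (hL.add (IsSymm.ext fun _ _ => rfl)).inv

end Green

namespace IsConnectedLaplacian

section CommRing

variable {R : Type*} [CommRing R] [PartialOrder R] {L : Matrix V V R}

lemma sum_col (hL : L.IsConnectedLaplacian) (w : V) : ∑ v, L v w = 0 := by
  simpa only [hL.isSymm.apply] using hL.sum_row w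

lemma sum_mulVec (hL : L.IsConnectedLaplacian) (ξ : V → R) : ∑ v, (L *ᵥ ξ) v = 0 := by
  simp only [mulVec, dotProduct]
  rw [Finset.sum_comm]
  simp [← Finset.sum_mul, hL.sum_col]

lemma mulVec_const (hL : L.IsConnectedLaplacian) (c : R) : L *ᵥ (fun _ => c) = 0 := by
  ext v
  simp [mulVec, dotProduct, ← Finset.sum_mul, hL.sum_row]

end CommRing

lemma map_intCast {R : Type*} [CommRing R] [PartialOrder R] [IsOrderedRing R] [CharZero R]
    {L : Matrix V V ℤ} (hL : L.IsConnectedLaplacian) :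
    (L.map (Int.cast : ℤ → R)).IsConnectedLaplacian where
  isSymm := hL.isSymm.map _
  nonpos_of_ne v w hvw := by simpa using hL.nonpos_of_ne v w hvw
  sum_row v := by simpa using congrArg (Int.cast : ℤ → R) (hL.sum_row v)
  connected := by simpa using hL.connected

section LinearOrder

variable {R : Type*} [CommRing R] [LinearOrder R] [IsStrictOrderedRing R] {L : Matrix V V R}

lemma eq_of_forall_le_of_mulVec_apply_eq_zero (hL : L.IsConnectedLaplacian) {x : V → R}
    {a b : V} (hx : (L *ᵥ x) a = 0) (hmax : ∀ u, x u ≤ x a) (hab : L a b ≠ 0) : x b = x a := by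
  have hsum : ∑ u, L a u * (x u - x a) = 0 := by
    simp only [mul_sub, Finset.sum_sub_distrib, ← Finset.sum_mul, hL.sum_row, zero_mul, sub_zero]
    exact hx
  have hterm : ∀ u ∈ Finset.univ, 0 ≤ L a u * (x u - x a) := fun u _ => by
    rcases eq_or_ne a u with rfl | hau
    · simp
    · exact mul_nonneg_of_nonpos_of_nonpos (hL.nonpos_of_ne a u hau) (sub_nonpos.2 (hmax u))
  have hb := (Finset.sum_eq_zero_iff_of_nonneg hterm).1 hsum b (Finset.mem_univ b)
  exact sub_eq_zero.1 ((mul_eq_zero.1 hb).resolve_left hab)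

lemma eq_of_mulVec_eq_zero (hL : L.IsConnectedLaplacian) {x : V → R} (hx : L *ᵥ x = 0)
    (v w : V) : x v = x w := by
  obtain ⟨a, -, hmax⟩ := Finset.exists_max_image Finset.univ x
    (Finset.univ_nonempty_iff.2 hL.connected.nonempty)
  have hreach (u : V) : x u = x a := by
    have hau := hL.connected.preconnected a u
    rw [SimpleGraph.reachable_eq_reflTransGen] at hau
    induction hau with
    | refl => rfl
    | tail _ hbc ih =>
      rw [← ih]
      refine hL.eq_of_forall_le_of_mulVec_apply_eq_zero (congrFun hx _)
        (fun u => ih ▸ hmax u (Finset.mem_univ u)) ?_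
      rw [SimpleGraph.fromRel_adj] at hbc
      exact hbc.2.elim id fun h => hL.isSymm.apply _ _ ▸ h
  rw [hreach v, hreach w]

end LinearOrder

section Field

variable {𝕜 : Type*} [Field 𝕜] [LinearOrder 𝕜] [IsStrictOrderedRing 𝕜] {L : Matrix V V 𝕜}

lemma sum_eq_zero_of_add_ones_mulVec (hL : L.IsConnectedLaplacian) {ξ x : V → 𝕜}
    (hξ : (L + of fun _ _ => 1) *ᵥ ξ = x) (hx : ∑ v, x v = 0) : ∑ v, ξ v = 0 := by
  have hcard : ∑ v, ((L + of fun _ _ => 1) *ᵥ ξ) v = Fintype.card V • ∑ v, ξ v := by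
    simp [add_ones_mulVec, Finset.sum_add_distrib, hL.sum_mulVec]
  rw [hξ, hx] at hcard
  have := hL.connected.nonempty
  exact (smul_eq_zero.1 hcard.symm).resolve_left Fintype.card_ne_zero

variable [DecidableEq V]

lemma isUnit_det_add_ones (hL : L.IsConnectedLaplacian) : IsUnit (L + of fun _ _ => 1).det := by
  rw [isUnit_iff_ne_zero, Ne, ← exists_mulVec_eq_zero_iff]
  rintro ⟨ξ, hξ0, hξ⟩
  have hsum := hL.sum_eq_zero_of_add_ones_mulVec hξ (by simp)
  rw [add_ones_mulVec, hsum, ← Pi.zero_def, add_zero] at hξ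
  obtain ⟨a⟩ := hL.connected.nonempty
  have hconst : ξ = fun _ => ξ a := funext fun v => hL.eq_of_mulVec_eq_zero hξ v a
  rw [hconst, Finset.sum_const] at hsum
  exact hξ0 (hconst.trans (funext fun _ =>
    (smul_eq_zero.1 hsum).resolve_left (Finset.card_ne_zero.2 ⟨a, Finset.mem_univ a⟩)))

lemma mulVec_greenMatrix_mulVec (hL : L.IsConnectedLaplacian) {x : V → 𝕜} (hx : ∑ v, x v = 0) :
    L *ᵥ (greenMatrix L *ᵥ x) = x := by
  have hinv : (L + of fun _ _ => 1) *ᵥ (greenMatrix L *ᵥ x) = x := by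
    rw [greenMatrix, mulVec_mulVec, mul_nonsing_inv _ hL.isUnit_det_add_ones, one_mulVec]
  have hsum := hL.sum_eq_zero_of_add_ones_mulVec hinv hx
  rwa [add_ones_mulVec, hsum, ← Pi.zero_def, add_zero] at hinv

lemma mulVec_dotProduct_greenMatrix_mulVec (hL : L.IsConnectedLaplacian) (r : V → 𝕜)
    {y : V → 𝕜} (hy : ∑ v, y v = 0) : L *ᵥ r ⬝ᵥ greenMatrix L *ᵥ y = r ⬝ᵥ y := by
  rw [hL.isSymm.mulVec_dotProduct, hL.mulVec_greenMatrix_mulVec hy]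

end Field

end IsConnectedLaplacian

end Matrix

lemma exists_mk_dotProduct_eq {V : Type*} [Fintype V] [DecidableEq V] (ψ : (V → ℤ) →ₗ[ℤ] ℚ⧸ℤ) :
    ∃ r : V → ℚ, ∀ y, (r ⬝ᵥ Int.cast ∘ y : ℚ) = ψ y := by
  choose r hr using fun v => QuotientAddGroup.mk_surjective (ψ fun w => if v = w then 1 else 0)
  refine ⟨r, fun y => ?_⟩
  rw [LinearMap.pi_apply_eq_sum_univ ψ y, dotProduct, QuotientAddGroup.mk_sum]
  refine Finset.sum_congr rfl fun v _ => ?_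
  rw [← hr v, ← QuotientAddGroup.mk_zsmul, zsmul_eq_mul, mul_comm, Function.comp_apply]

section Jacobian

variable {V : Type} [Fintype V] {L : V → V → ℤ}

local notation "K" => LinearMap.ker (degMap V)
local notation "S" =>
  Submodule.comap (Submodule.subtype (LinearMap.ker (degMap V))) (LinearMap.range (lapMap V L))
local notation "Lℚ" => Matrix.map (Matrix.of L) (Int.cast : ℤ → ℚ)

@[simp]
lemma degMap_apply (x : V → ℤ) : degMap V x = ∑ v, x v := by
  simp [degMap]

lemma mem_ker_degMap {x : V → ℤ} : x ∈ K ↔ ∑ v, x v = 0 := by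
  simp

lemma sum_intCast_eq_zero (y : K) : ∑ v, (Int.cast ∘ (y : V → ℤ) : V → ℚ) v = 0 := by
  simpa using congrArg (Int.cast : ℤ → ℚ) (mem_ker_degMap.1 y.2)

lemma intCast_comp_lapMap (u : V → ℤ) :
    (Int.cast ∘ lapMap V L u : V → ℚ) = Lℚ *ᵥ (Int.cast ∘ u) := by
  ext v
  exact RingHom.map_mulVec (Int.castRingHom ℚ) _ u v

variable [DecidableEq V]

variable (V) in
noncomputable def degKerRetraction (v₀ : V) : (V → ℤ) →ₗ[ℤ] K :=
  LinearMap.codRestrict K (LinearMap.id - (degMap V).smulRight (Pi.single v₀ 1)) fun z => by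
    simp [Finset.sum_sub_distrib, ← Finset.mul_sum]

lemma degKerRetraction_apply (v₀ : V) (y : K) : degKerRetraction V v₀ y = y := by
  ext1
  simp [degKerRetraction]

variable (L) in
noncomputable def jacForm : K →ₗ[ℤ] K →ₗ[ℤ] ℚ :=
  let ι : K →ₗ[ℤ] V → ℚ :=
    LinearMap.compLeft (Int.castAddHom ℚ).toIntLinearMap V ∘ₗ Submodule.subtype _
  ((Matrix.toLinearMap₂' ℚ (greenMatrix Lℚ)).restrictScalars₁₂ ℤ ℤ).compl₁₂ ι ι

lemma jacForm_apply (x y : K) :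
    jacForm L x y = Int.cast ∘ (x : V → ℤ) ⬝ᵥ greenMatrix Lℚ *ᵥ (Int.cast ∘ (y : V → ℤ)) := by
  simp only [jacForm, LinearMap.compl₁₂_apply, LinearMap.coe_comp, Submodule.coe_subtype,
    Function.comp_apply, LinearMap.restrictScalars₁₂_apply_apply, toLinearMap₂'_apply']
  rfl

lemma jacForm_eq_of_actMap {Γ : Type} [Group Γ] [MulAction Γ V]
    (hequiv : ∀ (γ : Γ) (v w : V), L (γ • v) (γ • w) = L v w) {γ : Γ} {x y x' y' : K}
    (hx' : (x' : V → ℤ) = actMap V Γ γ x) (hy' : (y' : V → ℤ) = actMap V Γ γ⁻¹ y) :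
    jacForm L x' y = jacForm L x y' := by
  set σ : V ≃ V := MulAction.toPerm γ⁻¹
  have hLσ : Matrix.submatrix Lℚ σ σ = Lℚ := by
    ext v w
    simp [σ, hequiv]
  have hx'σ : (Int.cast ∘ (x' : V → ℤ) : V → ℚ) = (Int.cast ∘ (x : V → ℤ)) ∘ σ := by
    rw [hx']
    rfl
  have hyσ : (Int.cast ∘ (y : V → ℤ) : V → ℚ) = (Int.cast ∘ (y' : V → ℤ)) ∘ σ := by
    ext v
    simp [σ, hy', actMap]
  rw [jacForm_apply, jacForm_apply, hx'σ, hyσ,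
    dotProduct_mulVec_comp_equiv (greenMatrix_submatrix hLσ)]

variable (hL : (Matrix.of L).IsConnectedLaplacian)
include hL

lemma jacForm_comm (x y : K) : jacForm L x y = jacForm L y x := by
  rw [jacForm_apply, jacForm_apply, ← (hL.isSymm.map _).greenMatrix.mulVec_dotProduct,
    dotProduct_comm]

lemma jacForm_mem_zmultiples_of_left_mem {x : K} (hx : x ∈ S) (y : K) :
    jacForm L x y ∈ AddSubgroup.zmultiples (1 : ℚ) := by
  obtain ⟨u, hu⟩ := hx
  rw [jacForm_apply, ← show lapMap V L u = x from hu, intCast_comp_lapMap,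
    hL.map_intCast.mulVec_dotProduct_greenMatrix_mulVec _ (sum_intCast_eq_zero y)]
  simpa [dotProduct] using AddSubgroup.intCast_mem_zmultiples_one (R := ℚ) (u ⬝ᵥ (y : V → ℤ))

lemma jacForm_mem_zmultiples_of_right_mem (x : K) {y : K} (hy : y ∈ S) :
    jacForm L x y ∈ AddSubgroup.zmultiples (1 : ℚ) :=
  jacForm_comm hL x y ▸ jacForm_mem_zmultiples_of_left_mem hL hy x

variable (L) in
noncomputable def jacPairing : jacQuot V L →ₗ[ℤ] jacQuot V L →ₗ[ℤ] ℚ⧸ℤ :=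
  (jacForm L).compr₂ (QuotientAddGroup.mk' _).toIntLinearMap |>.liftQ₂ S S
    (fun _ hx => LinearMap.ext fun y =>
      (QuotientAddGroup.eq_zero_iff _).2 (jacForm_mem_zmultiples_of_left_mem hL hx y))
    (fun _ hy => LinearMap.ext fun x =>
      (QuotientAddGroup.eq_zero_iff _).2 (jacForm_mem_zmultiples_of_right_mem hL x hy))

lemma jacPairing_mk (x y : K) :
    jacPairing L hL (Submodule.Quotient.mk x) (Submodule.Quotient.mk y) = jacForm L x y :=
  rfl

lemma mem_of_forall_jacForm_mem {x : K}
    (h : ∀ y : K, jacForm L x y ∈ AddSubgroup.zmultiples (1 : ℚ)) : x ∈ S := by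
  obtain ⟨v₀⟩ := hL.connected.nonempty
  set ξ := greenMatrix Lℚ *ᵥ (Int.cast ∘ (x : V → ℤ)) with hξ
  have hdiff (v : V) : ∃ m : ℤ, (m : ℚ) = ξ v - ξ v₀ := by
    have hy : Pi.single v 1 - Pi.single v₀ 1 ∈ K := by simp
    obtain ⟨m, hm⟩ := AddSubgroup.mem_zmultiples_iff.1 (h ⟨_, hy⟩)
    refine ⟨m, ?_⟩
    rw [← zsmul_one, hm, jacForm_apply, ← hL.map_intCast.isSymm.greenMatrix.mulVec_dotProduct]
    simp [dotProduct, Pi.single_apply, mul_sub, Finset.sum_sub_distrib, ← hξ]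
  choose m hm using hdiff
  have hlap : (Int.cast ∘ lapMap V L m : V → ℚ) = Int.cast ∘ (x : V → ℤ) := by
    rw [intCast_comp_lapMap, show (Int.cast ∘ m : V → ℚ) = ξ - fun _ => ξ v₀ from funext hm,
      mulVec_sub, hL.map_intCast.mulVec_const, sub_zero,
      hL.map_intCast.mulVec_greenMatrix_mulVec (sum_intCast_eq_zero x)]
  exact ⟨m, Int.cast_injective.comp_left hlap⟩

lemma exists_jacForm_eq (φ : jacQuot V L →ₗ[ℤ] ℚ⧸ℤ) :
    ∃ x : K, ∀ y : K, (jacForm L x y : ℚ⧸ℤ) = φ (Submodule.Quotient.mk y) := by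
  obtain ⟨v₀⟩ := hL.connected.nonempty
  set ψ := φ ∘ₗ Submodule.mkQ _ ∘ₗ degKerRetraction V v₀
  have hψ (y : K) : ψ y = φ (Submodule.Quotient.mk y) := by
    simp [ψ, degKerRetraction_apply]
  obtain ⟨r, hr⟩ := exists_mk_dotProduct_eq ψ
  have hLr (v : V) : ∃ n : ℤ, (n : ℚ) = (Lℚ *ᵥ r) v := by
    have hcol : lapMap V L (Pi.single v 1) ∈ K := mem_ker_degMap.2 (hL.sum_mulVec _)
    have hrow : (Lℚ *ᵥ r) v = r ⬝ᵥ Int.cast ∘ lapMap V L (Pi.single v 1) := by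
      rw [intCast_comp_lapMap, ← hL.map_intCast.isSymm.mulVec_dotProduct]
      simp [dotProduct, Pi.single_apply]
    have hS : (Submodule.Quotient.mk ⟨_, hcol⟩ : jacQuot V L) = 0 :=
      (Submodule.Quotient.mk_eq_zero _).2 (LinearMap.mem_range_self _ _)
    have hzero : ((Lℚ *ᵥ r) v : ℚ⧸ℤ) = 0 := by
      rw [hrow, hr, show lapMap V L (Pi.single v 1) = (⟨_, hcol⟩ : K) from rfl, hψ, hS, map_zero]
    obtain ⟨n, hn⟩ := AddSubgroup.mem_zmultiples_iff.1 ((QuotientAddGroup.eq_zero_iff _).1 hzero)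
    exact ⟨n, by rw [← hn, zsmul_one]⟩
  choose n hn using hLr
  have hnK : n ∈ K := mem_ker_degMap.2 <| Int.cast_injective (α := ℚ) <| by
    simpa [← hn] using hL.map_intCast.sum_mulVec r
  refine ⟨⟨n, hnK⟩, fun y => ?_⟩
  rw [jacForm_apply, show (Int.cast ∘ n : V → ℚ) = Lℚ *ᵥ r from funext hn,
    hL.map_intCast.mulVec_dotProduct_greenMatrix_mulVec _ (sum_intCast_eq_zero y), hr, hψ]

lemma exists_ne_zero_smul_mem : ∃ d : ℤ, d ≠ 0 ∧ ∀ x : K, d • x ∈ S := by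
  obtain ⟨⟨d, hd⟩, hdG⟩ := IsLocalization.exist_integer_multiples (nonZeroDivisors ℤ)
    Finset.univ fun p : V × V => greenMatrix Lℚ p.1 p.2
  have hdG_int (v w : V) : d • greenMatrix Lℚ v w ∈ AddSubgroup.zmultiples (1 : ℚ) := by
    obtain ⟨n, hn⟩ := hdG (v, w) (Finset.mem_univ _)
    simp [← hn]
  refine ⟨d, nonZeroDivisors.ne_zero hd, fun x => mem_of_forall_jacForm_mem hL fun y => ?_⟩
  have hsum : jacForm L (d • x) y =
      ∑ v, ∑ w, ((x : V → ℤ) v * (y : V → ℤ) w) • (d • greenMatrix Lℚ v w) := by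
    simp only [map_zsmul, LinearMap.smul_apply, jacForm_apply, dotProduct, mulVec,
      Finset.mul_sum, Finset.smul_sum, zsmul_eq_mul, Function.comp_apply]
    refine Finset.sum_congr rfl fun v _ => Finset.sum_congr rfl fun w _ => ?_
    push_cast
    ring
  rw [hsum]
  exact AddSubgroup.sum_mem _ fun v _ => AddSubgroup.sum_mem _ fun w _ =>
    AddSubgroup.zsmul_mem _ (hdG_int v w) _

lemma finite_jacQuot : Finite (jacQuot V L) := by
  obtain ⟨d, hd, hdS⟩ := exists_ne_zero_smul_mem hL
  refine Module.finite_of_fg_torsion _ fun a => ?_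
  obtain ⟨x, rfl⟩ := Submodule.Quotient.mk_surjective _ a
  exact ⟨⟨d, mem_nonZeroDivisors_of_ne_zero hd⟩, (Submodule.Quotient.mk_eq_zero _).2 (hdS x)⟩

lemma jacPairing_bijective : Function.Bijective (jacPairing L hL) := by
  refine ⟨(injective_iff_map_eq_zero _).2 fun a ha => ?_, fun φ => ?_⟩
  · obtain ⟨x, rfl⟩ := Submodule.Quotient.mk_surjective _ a
    refine (Submodule.Quotient.mk_eq_zero _).2 (mem_of_forall_jacForm_mem hL fun y => ?_)
    have hxy := LinearMap.congr_fun ha (Submodule.Quotient.mk y)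
    rwa [jacPairing_mk, LinearMap.zero_apply, QuotientAddGroup.eq_zero_iff] at hxy
  · obtain ⟨x, hx⟩ := exists_jacForm_eq hL φ
    exact ⟨Submodule.Quotient.mk x, Submodule.linearMap_qext _ (LinearMap.ext hx)⟩

variable (L) in
noncomputable def jacDualEquiv : jacQuot V L ≃+ (jacQuot V L →+ ℚ⧸ℤ) :=
  ((LinearEquiv.ofBijective _ (jacPairing_bijective hL)).trans
    (addMonoidHomLequivInt ℤ).symm).toAddEquiv

lemma jacDualEquiv_apply (x y : K) :
    jacDualEquiv L hL (jacMk V L x) (jacMk V L y) = jacForm L x y :=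
  rfl

end Jacobian

theorem jacobian_self_dual_general
    (V : Type) [Fintype V] (Γ : Type) [Group Γ] [MulAction Γ V]
    (L : V → V → ℤ)
    (hsymm : ∀ v w, L v w = L w v)
    (hoffdiag : ∀ v w, v ≠ w → L v w ≤ 0)
    (hrowsum : ∀ v, ∑ w, L v w = 0)
    (hequiv : ∀ (γ : Γ) (v w : V), L (γ • v) (γ • w) = L v w)
    (hconn : (SimpleGraph.fromRel fun v w => L v w ≠ 0).Connected) :
    Finite (jacQuot V L) ∧
      ∃ e : jacQuot V L ≃+ (jacQuot V L →+ ℚ ⧸ AddSubgroup.zmultiples (1 : ℚ)),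
        ∀ (γ : Γ) (x y x' y' : LinearMap.ker (degMap V)),
          (x' : V → ℤ) = actMap V Γ γ (x : V → ℤ) →
          (y' : V → ℤ) = actMap V Γ γ⁻¹ (y : V → ℤ) →
          e (jacMk V L x') (jacMk V L y) = e (jacMk V L x) (jacMk V L y') := by
  classical
  have hL : (Matrix.of L).IsConnectedLaplacian :=
    ⟨Matrix.IsSymm.ext fun v w => hsymm w v, hoffdiag, hrowsum, hconn⟩
  refine ⟨finite_jacQuot hL, jacDualEquiv L hL, fun γ x y x' y' hx' hy' => ?_⟩
  rw [jacDualEquiv_apply, jacDualEquiv_apply, jacForm_eq_of_actMap hequiv hx' hy']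

theorem jacobian_self_dual
    (V : Type) [Fintype V] [Nonempty V] (Γ : Type) [Group Γ] [MulAction Γ V]
    (L : V → V → ℤ)
    (hsymm : ∀ v w, L v w = L w v)
    (hoffdiag : ∀ v w, v ≠ w → L v w ≤ 0)
    (hrowsum : ∀ v, ∑ w, L v w = 0)
    (hequiv : ∀ (γ : Γ) (v w : V), L (γ • v) (γ • w) = L v w)
    (hconn : (SimpleGraph.fromRel fun v w => L v w ≠ 0).Connected) :
    Finite (jacQuot V L) ∧
      ∃ e : jacQuot V L ≃+ (jacQuot V L →+ ℚ ⧸ AddSubgroup.zmultiples (1 : ℚ)),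
        ∀ (γ : Γ) (x y x' y' : LinearMap.ker (degMap V)),
          (x' : V → ℤ) = actMap V Γ γ (x : V → ℤ) →
          (y' : V → ℤ) = actMap V Γ γ⁻¹ (y : V → ℤ) →
          e (jacMk V L x') (jacMk V L y) = e (jacMk V L x) (jacMk V L y') :=
  jacobian_self_dual_general V Γ L hsymm hoffdiag hrowsum hequiv hconn
end
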